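/- arXiv:1308.3303 — 2 statements merged into one kernel-verified Lean document; each statement's English description precedes it below -/
import Mathlib

section
/- Fix an integer n ≥ 1 and for each σ > 0 let g_σ(r) = 2 r^{n−1} e^{−r²/(2σ²)} / (2^{n/2} σⁿ Γ(n/2)) for r ≥ 0 (and g_σ(r) = 0 for r < 0). Let f_u : ℝ → [0, ∞) be nondecreasing and measurable (independent of σ), and suppose r₁ ∈ ℝ satisfies f_u(r₁) = 1. Then for every σ > 0, r₁ minimizes Φ_σ(t) = ∫_{-∞}^{t} f_u(r) g_σ(r) dr + ∫_{t}^{+∞} g_σ(r) dr over t ∈ ℝ. In particular, the optimal parameter of the sphere bound does not depend on the signal-to-noise ratio. -/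
/-!
For `t ≥ r₁` or `t ≤ r₁` alike, `Φ_σ(t) - Φ_σ(r₁) = ∫_{r₁}^{t} (f_u - 1) g_σ` as an oriented
integral. Since `f_u` is monotone with `f_u(r₁) = 1` and `g_σ ≥ 0`, the integrand is `≤ 0` left
of `r₁` and `≥ 0` right of it, so this oriented integral is nonnegative whatever `t` is. Only the
nonnegativity and integrability of `g_σ` enter, so the minimizer `r₁` cannot depend on `σ`.
-/

open MeasureTheory

/-- The density of the norm of an `n`-dimensional Gaussian noise vector with
independent coordinates of mean `0` and variance `σ²`:
`g_σ(r) = 2 r^{n-1} e^{-r²/(2σ²)} / (2^{n/2} σⁿ Γ(n/2))` for `r ≥ 0`, and `0`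
for `r < 0`. -/
noncomputable def chiDensity (n : ℕ) (σ : ℝ) (r : ℝ) : ℝ :=
  if 0 ≤ r then
    2 * r ^ (n - 1) * Real.exp (-(r ^ 2) / (2 * σ ^ 2)) /
      ((2 : ℝ) ^ ((n : ℝ) / 2) * σ ^ n * Real.Gamma ((n : ℝ) / 2))
  else 0

open Set

lemma chiDensity_nonneg (n : ℕ) {σ : ℝ} (hσ : 0 < σ) : 0 ≤ chiDensity n σ := by
  intro r
  unfold chiDensity
  split_ifs
  · have := Real.Gamma_nonneg_of_nonneg (s := (n : ℝ) / 2) (by positivity)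
    positivity
  · rfl

lemma chiDensity_eq_indicator (n : ℕ) (σ : ℝ) :
    chiDensity n σ = (Ici 0).indicator fun r =>
      (2 / ((2 : ℝ) ^ ((n : ℝ) / 2) * σ ^ n * Real.Gamma ((n : ℝ) / 2))) *
        (r ^ ((n - 1 : ℕ) : ℝ) * Real.exp (-(1 / (2 * σ ^ 2)) * r ^ 2)) := by
  ext r
  unfold chiDensity
  split_ifs with hr
  · rw [indicator_of_mem (mem_Ici.2 hr), Real.rpow_natCast]
    ring_nf
  · rw [indicator_of_notMem (notMem_Ici.2 (not_le.1 hr))]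

lemma integrable_chiDensity (n : ℕ) {σ : ℝ} (hσ : 0 < σ) : Integrable (chiDensity n σ) := by
  rw [chiDensity_eq_indicator]
  refine Integrable.indicator (Integrable.const_mul ?_ _) measurableSet_Ici
  exact integrable_rpow_mul_exp_neg_mul_sq (by positivity)
    (by linarith [(n - 1 : ℕ).cast_nonneg (α := ℝ)])

lemma integrableOn_Iic_mul_of_monotone {μ : Measure ℝ} {f g : ℝ → ℝ} (hf_nonneg : 0 ≤ f)
    (hf : Monotone f) (hg : Integrable g μ) (s : ℝ) :
    IntegrableOn (fun r => f r * g r) (Iic s) μ :=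
  hg.integrableOn.bdd_mul hf.measurable.aestronglyMeasurable <|
    ae_restrict_of_forall_mem measurableSet_Iic fun r hr => by
      rw [Real.norm_of_nonneg (hf_nonneg r)]
      exact hf hr

lemma intervalIntegral.integral_nonneg_of_sign_change {μ : Measure ℝ} {h : ℝ → ℝ} {a : ℝ}
    (h_nonpos : ∀ r ≤ a, h r ≤ 0) (h_nonneg : ∀ r, a < r → 0 ≤ h r) (b : ℝ) :
    0 ≤ ∫ r in a..b, h r ∂μ := by
  rw [intervalIntegral, sub_nonneg]
  exact (setIntegral_nonpos measurableSet_Ioc fun r hr => h_nonpos r hr.2).trans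
    (setIntegral_nonneg measurableSet_Ioc fun r hr => h_nonneg r hr.1)

theorem integral_Iic_mul_add_integral_Ioi_le {μ : Measure ℝ} {f g : ℝ → ℝ} (hf_nonneg : 0 ≤ f)
    (hf : Monotone f) (hg_nonneg : 0 ≤ g) (hg : Integrable g μ) {r₁ : ℝ} (hr₁ : f r₁ = 1)
    (t : ℝ) :
    ((∫ r in Iic r₁, f r * g r ∂μ) + ∫ r in Ioi r₁, g r ∂μ) ≤
      (∫ r in Iic t, f r * g r ∂μ) + ∫ r in Ioi t, g r ∂μ := by
  have hfg := integrableOn_Iic_mul_of_monotone hf_nonneg hf hg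
  have h_diff : ((∫ r in Iic t, f r * g r ∂μ) - ∫ r in Iic r₁, f r * g r ∂μ) -
      ((∫ r in Ioi r₁, g r ∂μ) - ∫ r in Ioi t, g r ∂μ) = ∫ r in r₁..t, (f r - 1) * g r ∂μ := by
    rw [intervalIntegral.integral_Iic_sub_Iic (hfg r₁) (hfg t),
      intervalIntegral.integral_Ioi_sub_Ioi' hg.integrableOn hg.integrableOn,
      ← intervalIntegral.integral_sub
        ((hfg (max r₁ t)).mono_set Icc_subset_Iic_self).intervalIntegrable
        hg.intervalIntegrable]
    simp only [sub_mul, one_mul]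
  have h_nonneg : 0 ≤ ∫ r in r₁..t, (f r - 1) * g r ∂μ :=
    intervalIntegral.integral_nonneg_of_sign_change
      (fun r hr => mul_nonpos_of_nonpos_of_nonneg (by linarith [hf hr]) (hg_nonneg r))
      (fun r hr => mul_nonneg (by linarith [hf hr.le]) (hg_nonneg r)) t
  linarith

theorem sphere_bound_optimal_radius_independent_of_SNR_general
    (n : ℕ)
    (fu : ℝ → ℝ) (hfu_nonneg : ∀ r, 0 ≤ fu r) (hfu_mono : Monotone fu)
    (r₁ : ℝ) (hr₁ : fu r₁ = 1) :
    ∀ σ : ℝ, 0 < σ → ∀ t : ℝ,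
      ((∫ r in Set.Iic r₁, fu r * chiDensity n σ r) +
          ∫ r in Set.Ioi r₁, chiDensity n σ r) ≤
        (∫ r in Set.Iic t, fu r * chiDensity n σ r) +
          ∫ r in Set.Ioi t, chiDensity n σ r :=
  fun _ hσ t => integral_Iic_mul_add_integral_Ioi_le hfu_nonneg hfu_mono
    (chiDensity_nonneg n hσ) (integrable_chiDensity n hσ) hr₁ t

/-- If `f_u` is nondecreasing, nonnegative, measurable and independent of `σ`,
and `f_u(r₁) = 1`, then for every `σ > 0` the parameter `r₁` minimizes the
sphere bound `Φ_σ(t) = ∫_{-∞}^{t} f_u(r) g_σ(r) dr + ∫_{t}^{∞} g_σ(r) dr`: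
the optimal parameter of the sphere bound does not depend on the SNR. -/
theorem sphere_bound_optimal_radius_independent_of_SNR
    (n : ℕ) (hn : 1 ≤ n)
    (fu : ℝ → ℝ) (hfu_nonneg : ∀ r, 0 ≤ fu r) (hfu_mono : Monotone fu)
    (hfu_meas : Measurable fu)
    (r₁ : ℝ) (hr₁ : fu r₁ = 1) :
    ∀ σ : ℝ, 0 < σ → ∀ t : ℝ,
      ((∫ r in Set.Iic r₁, fu r * chiDensity n σ r) +
          ∫ r in Set.Ioi r₁, chiDensity n σ r) ≤
        (∫ r in Set.Iic t, fu r * chiDensity n σ r) +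
          ∫ r in Set.Ioi t, chiDensity n σ r :=
  sphere_bound_optimal_radius_independent_of_SNR_general n fu hfu_nonneg hfu_mono r₁ hr₁
end

section
/- Let n ≥ 2, r > 0, c ∈ ℝⁿ, and let Y be distributed according to the normalized (uniform) surface measure on the sphere {y ∈ ℝⁿ : ‖y − c‖ = r}. If s, ŝ ∈ ℝⁿ satisfy s ≠ ŝ and ‖c − ŝ‖ ≤ ‖c − s‖ (the center of the sphere is at least as close to the competitor ŝ as to s), then P(‖Y − ŝ‖ ≤ ‖Y − s‖) ≥ 1/2. -/
/-!
The set of points at least as close to `s'` as to `s` is a closed half-space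
`{y | 2 ⟪y, s - s'⟫ ≤ ‖s‖² - ‖s'‖²}`. It contains the center `c`, hence every point `c + r • u`
with `⟪u, s - s'⟫ ≤ 0`. The surface measure on the unit sphere is invariant under the antipodal
map, and the closed hemisphere `{u | ⟪u, s - s'⟫ ≤ 0}` together with its antipode covers the
sphere, so it carries at least half of the mass.
-/

open MeasureTheory

/-- The normalized (uniform) surface measure on the sphere
`{y ∈ ℝⁿ : ‖y - c‖ = r}`: the pushforward of the normalized surface measure on
the unit sphere under `y ↦ c + r • y`. -/
noncomputable def sphereUniform (n : ℕ) (c : EuclideanSpace ℝ (Fin n)) (r : ℝ) :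
    Measure (EuclideanSpace ℝ (Fin n)) :=
  ((volume : Measure (EuclideanSpace ℝ (Fin n))).toSphere Set.univ)⁻¹ •
    Measure.map
      (fun y : Metric.sphere (0 : EuclideanSpace ℝ (Fin n)) 1 =>
        c + r • (y : EuclideanSpace ℝ (Fin n)))
      (volume : Measure (EuclideanSpace ℝ (Fin n))).toSphere

open Metric Set
open scoped Pointwise RealInnerProductSpace ENNReal

section InnerProductSpace

variable {E : Type*} [NormedAddCommGroup E] [InnerProductSpace ℝ E]

theorem norm_sub_le_norm_sub_iff_two_mul_inner_le (y s s' : E) :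
    ‖y - s'‖ ≤ ‖y - s‖ ↔ 2 * ⟪y, s - s'⟫ ≤ ‖s‖ ^ 2 - ‖s'‖ ^ 2 := by
  rw [← sq_le_sq₀ (norm_nonneg _) (norm_nonneg _), norm_sub_sq_real, norm_sub_sq_real,
    inner_sub_right]
  constructor <;> intro h <;> linarith

theorem norm_add_smul_sub_le_of_inner_nonpos {c s s' u : E} {r : ℝ} (hc : ‖c - s'‖ ≤ ‖c - s‖)
    (hr : 0 ≤ r) (hu : ⟪u, s - s'⟫ ≤ 0) : ‖c + r • u - s'‖ ≤ ‖c + r • u - s‖ := by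
  rw [norm_sub_le_norm_sub_iff_two_mul_inner_le] at hc ⊢
  rw [inner_add_left, real_inner_smul_left]
  nlinarith [mul_nonpos_of_nonneg_of_nonpos hr hu]

end InnerProductSpace

namespace MeasureTheory.Measure

instance toSphere.isNegInvariant {E : Type*} [NormedAddCommGroup E] [NormedSpace ℝ E]
    [MeasurableSpace E] [BorelSpace E] (μ : Measure E) [μ.IsNegInvariant] :
    μ.toSphere.IsNegInvariant := by
  refine ⟨ext fun s hs => ?_⟩
  have himage : ((↑) '' (-s) : Set E) = -((↑) '' s) := by
    rw [← image_neg_eq_neg, ← image_neg_eq_neg, image_image, image_image]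
    rfl
  rw [neg_apply, toSphere_apply' _ hs.neg, toSphere_apply' _ hs, himage, Set.smul_neg,
    measure_neg]

theorem measure_univ_le_two_mul_of_union_neg {α : Type*} [MeasurableSpace α] [InvolutiveNeg α]
    [MeasurableNeg α] (ν : Measure α) [ν.IsNegInvariant] {A : Set α} (hA : A ∪ -A = univ) :
    ν univ ≤ 2 * ν A :=
  calc ν univ = ν (A ∪ -A) := by rw [hA]
    _ ≤ ν A + ν (-A) := measure_union_le _ _
    _ = 2 * ν A := by rw [measure_neg, two_mul]

variable {E : Type*} [NormedAddCommGroup E] [InnerProductSpace ℝ E] [MeasurableSpace E]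
  [BorelSpace E] (μ : Measure E) [μ.IsNegInvariant]

theorem toSphere_univ_le_two_mul_inner_nonpos (v : E) :
    μ.toSphere univ ≤ 2 * μ.toSphere {u | ⟪(u : E), v⟫ ≤ 0} := by
  refine measure_univ_le_two_mul_of_union_neg _ (eq_univ_of_forall fun u => ?_)
  simpa [inner_neg_left] using le_total ⟪(u : E), v⟫ 0

theorem toSphere_univ_le_two_mul_preimage_closer {c s s' : E} {r : ℝ}
    (hc : ‖c - s'‖ ≤ ‖c - s‖) (hr : 0 ≤ r) :
    μ.toSphere univ ≤ 2 * μ.toSphere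
      ((fun u : sphere (0 : E) 1 => c + r • (u : E)) ⁻¹' {y | ‖y - s'‖ ≤ ‖y - s‖}) :=
  (toSphere_univ_le_two_mul_inner_nonpos μ (s - s')).trans <| by
    gcongr
    exact fun u hu => norm_add_smul_sub_le_of_inner_nonpos hc hr hu

end MeasureTheory.Measure

section sphereUniform

variable {n : ℕ} {c : EuclideanSpace ℝ (Fin n)} {r : ℝ}

theorem sphereUniform_apply {S : Set (EuclideanSpace ℝ (Fin n))} (hS : MeasurableSet S) :
    sphereUniform n c r S =
      (volume : Measure (EuclideanSpace ℝ (Fin n))).toSphere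
          ((fun u : sphere (0 : EuclideanSpace ℝ (Fin n)) 1 =>
            c + r • (u : EuclideanSpace ℝ (Fin n))) ⁻¹' S) /
        (volume : Measure (EuclideanSpace ℝ (Fin n))).toSphere univ := by
  rw [sphereUniform, Measure.smul_apply, Measure.map_apply (by fun_prop) hS, smul_eq_mul,
    ENNReal.div_eq_inv_mul]

theorem isProbabilityMeasure_sphereUniform (hn : n ≠ 0) :
    IsProbabilityMeasure (sphereUniform n c r) := by
  have hne : (volume : Measure (EuclideanSpace ℝ (Fin n))).toSphere univ ≠ 0 :=
    Measure.measure_univ_ne_zero.2 <|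
      mt (Measure.toSphere_eq_zero_iff_finrank _).1 (by simpa using hn)
  exact ⟨by rw [sphereUniform_apply .univ, preimage_univ, ENNReal.div_self hne (by finiteness)]⟩

end sphereUniform

theorem sphere_center_on_competitor_side_half_general
    (n : ℕ) (hn : 2 ≤ n) (r : ℝ) (hr : 0 < r)
    (c s s' : EuclideanSpace ℝ (Fin n))
    (hc : ‖c - s'‖ ≤ ‖c - s‖) :
    (1 : ℝ) / 2 ≤ ((sphereUniform n c r) {y | ‖y - s'‖ ≤ ‖y - s‖}).toReal := by
  have := isProbabilityMeasure_sphereUniform (c := c) (r := r) (by omega : n ≠ 0)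
  set S := {y : EuclideanSpace ℝ (Fin n) | ‖y - s'‖ ≤ ‖y - s‖}
  have hS : MeasurableSet S := measurableSet_le (by fun_prop) (by fun_prop)
  have hP : sphereUniform n c r univ ≤ 2 * sphereUniform n c r S := by
    rw [sphereUniform_apply .univ, sphereUniform_apply hS, preimage_univ, ← mul_div_assoc]
    exact ENNReal.div_le_div_right (Measure.toSphere_univ_le_two_mul_preimage_closer _ hc hr.le) _
  have hP_real := ENNReal.toReal_mono (by finiteness) hP
  rw [measure_univ, ENNReal.toReal_mul] at hP_real
  norm_num at hP_real
  linarith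

/-- If `Y` is uniformly distributed on the sphere of radius `r > 0` centered at
`c` in `ℝⁿ`, and the center `c` is at least as close to the competitor `s'` as
to `s` (with `s ≠ s'`), then the conditional pair-wise error probability
satisfies `P(‖Y - s'‖ ≤ ‖Y - s‖) ≥ 1/2`. -/
theorem sphere_center_on_competitor_side_half
    (n : ℕ) (hn : 2 ≤ n) (r : ℝ) (hr : 0 < r)
    (c s s' : EuclideanSpace ℝ (Fin n)) (hne : s ≠ s')
    (hc : ‖c - s'‖ ≤ ‖c - s‖) :
    (1 : ℝ) / 2 ≤ ((sphereUniform n c r) {y | ‖y - s'‖ ≤ ‖y - s‖}).toReal :=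
  sphere_center_on_competitor_side_half_general n hn r hr c s s' hc
end
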